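/- Let X be a complex Banach space with open unit ball B and let Y be a closed subspace of X with unit ball B_Y. Then for every f ∈ A_u(B), the image of the fiber M₀(B_Y) under the Gelfand transform of the restriction f|_{B_Y} is contained in the image of the fiber M₀(B) under the Gelfand transform of f: (f|_{B_Y})^(M₀(B_Y)) ⊆ f̂(M₀(B)). -/
import Mathlib


open Metric Filter Topology

namespace ClusterValue

variable (X : Type*) [NormedAddCommGroup X] [NormedSpace ℂ X]

/-- Membership in `A_u(B)`: analytic on the open unit ball, bounded there,
and uniformly continuous there. -/
def MemAu (f : X → ℂ) : Prop :=
  AnalyticOn ℂ f (ball (0 : X) 1) ∧ (∃ C : ℝ, ∀ x ∈ ball (0 : X) 1, ‖f x‖ ≤ C) ∧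
    UniformContinuousOn f (ball (0 : X) 1)

/-- Membership in `H^∞(B)`: analytic on the open unit ball and bounded there. -/
def MemHinf (f : X → ℂ) : Prop :=
  AnalyticOn ℂ f (ball (0 : X) 1) ∧ (∃ C : ℝ, ∀ x ∈ ball (0 : X) 1, ‖f x‖ ≤ C)

/-- A character (nonzero continuous multiplicative linear functional) of the algebra
of functions on the open unit ball of `X` determined by the membership predicate `Mem`.
Functions are identified when they agree on the ball. -/
structure Character (Mem : (X → ℂ) → Prop) : Type _ where
  toFun : (X → ℂ) → ℂ
  congr' : ∀ f g, Mem f → Mem g → (∀ x ∈ ball (0 : X) 1, f x = g x) → toFun f = toFun g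
  map_add' : ∀ f g, Mem f → Mem g → toFun (f + g) = toFun f + toFun g
  map_mul' : ∀ f g, Mem f → Mem g → toFun (f * g) = toFun f * toFun g
  map_smul' : ∀ (c : ℂ) (f), Mem f → toFun (c • f) = c * toFun f
  map_one' : toFun 1 = 1
  continuous' : ∃ C : ℝ, ∀ (f : X → ℂ) (M : ℝ), Mem f →
    (∀ x ∈ ball (0 : X) 1, ‖f x‖ ≤ M) → ‖toFun f‖ ≤ C * M

variable {X}

/-- The fiber over `0`: characters annihilating all continuous linear functionals. -/
def Character.inFiberZero {Mem : (X → ℂ) → Prop} (τ : Character X Mem) : Prop :=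
  ∀ φ : X →L[ℂ] ℂ, τ.toFun ⇑φ = 0

/-- The fiber over `x'' ∈ X**`. -/
def Character.inFiber {Mem : (X → ℂ) → Prop} (τ : Character X Mem)
    (x'' : (X →L[ℂ] ℂ) →L[ℂ] ℂ) : Prop :=
  ∀ φ : X →L[ℂ] ℂ, τ.toFun ⇑φ = x'' φ

variable (X)

/-- The cluster set of `f` at `0`: limits of `f` along weakly null nets (filters) in the ball. -/
def clusterSetZero (f : X → ℂ) : Set ℂ :=
  {z | ∃ l : Filter X, l.NeBot ∧ l ≤ 𝓟 (ball (0 : X) 1) ∧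
    (∀ φ : X →L[ℂ] ℂ, Tendsto (fun x => φ x) l (𝓝 0)) ∧ Tendsto f l (𝓝 z)}

/-- The cluster set of `f` at `x'' ∈ X**`: limits of `f` along nets in the ball converging
weak-star to `x''`. -/
def clusterSet (f : X → ℂ) (x'' : (X →L[ℂ] ℂ) →L[ℂ] ℂ) : Set ℂ :=
  {z | ∃ l : Filter X, l.NeBot ∧ l ≤ 𝓟 (ball (0 : X) 1) ∧
    (∀ φ : X →L[ℂ] ℂ, Tendsto (fun x => φ x) l (𝓝 (x'' φ))) ∧ Tendsto f l (𝓝 z)}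

/-- A finite rank (bounded linear) operator. -/
def FiniteRank (S : X →L[ℂ] X) : Prop :=
  FiniteDimensional ℂ ↥(LinearMap.range (S : X →ₗ[ℂ] X))

/-- Finite type polynomials: the subalgebra of functions generated by the
continuous linear functionals (and constants). -/
def IsFiniteTypePoly (p : X → ℂ) : Prop :=
  p ∈ Algebra.adjoin ℂ (Set.range fun φ : X →L[ℂ] ℂ => (⇑φ : X → ℂ))

/-- Membership in `A(B)`: uniform limits on the ball of finite type polynomials. -/
def MemA (f : X → ℂ) : Prop :=
  ∀ ε > (0 : ℝ), ∃ p : X → ℂ, IsFiniteTypePoly X p ∧ ∀ x ∈ ball (0 : X) 1, ‖f x - p x‖ ≤ ε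

/-- A continuous polynomial: a finite sum of (diagonals of) continuous multilinear maps. -/
def IsContPoly (p : X → ℂ) : Prop :=
  ∃ (N : ℕ) (M : ∀ k : ℕ, ContinuousMultilinearMap ℂ (fun _ : Fin k => X) ℂ),
    ∀ x, p x = ∑ k ∈ Finset.range N, M k (fun _ => x)

end ClusterValue

open Metric Filter Topology ClusterValue in
theorem memAu_restrict {X : Type*} [NormedAddCommGroup X] [NormedSpace ℂ X]
    (Y : Submodule ℂ X) {g : X → ℂ} (hg : MemAu X g) :
    MemAu ↥Y (fun y : Y => g ↑y) := by
  obtain ⟨hA, ⟨C, hC⟩, hU⟩ := hg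
  have hmaps : Set.MapsTo (fun y : Y => (y : X)) (ball (0 : ↥Y) 1) (ball (0 : X) 1) := by
    intro y hy
    simp only [mem_ball, dist_zero_right] at hy ⊢
    simpa using hy
  refine ⟨?_, ⟨C, fun y hy => hC _ (hmaps hy)⟩, ?_⟩
  · exact hA.comp ((Y.subtypeL).analyticOn _) hmaps
  · rw [Metric.uniformContinuousOn_iff] at hU ⊢
    intro ε hε
    obtain ⟨δ, hδ, h⟩ := hU ε hε
    refine ⟨δ, hδ, fun y hy z hz hd => ?_⟩
    refine h _ (hmaps hy) _ (hmaps hz) ?_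
    simpa [dist_eq_norm] using hd

open Metric Filter Topology ClusterValue in
/-- For a Banach space `X` and a closed subspace `Y ⊆ X`, for every `f ∈ A_u(B)` the image
of the fiber `M₀(B_Y)` under the Gelfand transform of `f|_{B_Y}` is contained in the image
of the fiber `M₀(B)` under the Gelfand transform of `f`. -/
theorem statement8 {X : Type*} [NormedAddCommGroup X] [NormedSpace ℂ X]
    (Y : Submodule ℂ X) (hYclosed : IsClosed (Y : Set X))
    (f : X → ℂ) (hf : MemAu X f) :
    {z | ∃ τ : Character ↥Y (MemAu ↥Y), τ.inFiberZero ∧ τ.toFun (fun y => f ↑y) = z} ⊆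
      {z | ∃ τ : Character X (MemAu X), τ.inFiberZero ∧ τ.toFun f = z} := by
  rintro z ⟨τ, hτ0, hτf⟩
  refine ⟨⟨fun g => τ.toFun (fun y : Y => g ↑y), ?_, ?_, ?_, ?_, ?_, ?_⟩, ?_, ?_⟩
  · intro g h hg hh hgh
    refine τ.congr' _ _ (memAu_restrict Y hg) (memAu_restrict Y hh) fun y hy => ?_
    refine hgh _ ?_
    simp only [mem_ball, dist_zero_right] at hy ⊢
    simpa using hy
  · intro g h hg hh
    exact τ.map_add' _ _ (memAu_restrict Y hg) (memAu_restrict Y hh)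
  · intro g h hg hh
    exact τ.map_mul' _ _ (memAu_restrict Y hg) (memAu_restrict Y hh)
  · intro c g hg
    exact τ.map_smul' c _ (memAu_restrict Y hg)
  · exact τ.map_one'
  · obtain ⟨C, hC⟩ := τ.continuous'
    refine ⟨C, fun g M hg hM => ?_⟩
    refine hC _ M (memAu_restrict Y hg) fun y hy => ?_
    refine hM _ ?_
    simp only [mem_ball, dist_zero_right] at hy ⊢
    simpa using hy
  · intro φ
    exact hτ0 (φ.comp Y.subtypeL)
  · exact hτf
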